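/- Let v₁,…,v_n ∈ ℝ^D all lie in the nonnegative orthant with each ‖vᵢ‖₂ = 1, let R have spectral norm at most λ, let x̂ᵢ = vᵢ + ReLU(R vᵢ), μ̂⁰ = (1/n)Σvᵢ, μ̂ = (1/n)Σx̂ᵢ. Then ‖μ̂ − μ̂⁰‖₂ ≤ λ√n · ‖μ̂⁰‖₂. -/

import Mathlib

noncomputable def relu {D : ℕ} (u : EuclideanSpace ℝ (Fin D)) : EuclideanSpace ℝ (Fin D) :=
  WithLp.toLp 2 (fun j => max (u j) 0)

open scoped RealInnerProductSpace in
lemma norm_relu_le {D : ℕ} (u : EuclideanSpace ℝ (Fin D)) : ‖relu u‖ ≤ ‖u‖ := by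
  rw [EuclideanSpace.norm_eq, EuclideanSpace.norm_eq]
  apply Real.sqrt_le_sqrt
  apply Finset.sum_le_sum
  intro j _
  have h : |max (u j) 0| ≤ |u j| := by
    rcases le_total (u j) 0 with h | h
    · rw [max_eq_right h]; simpa using abs_nonneg (u j)
    · rw [max_eq_left h]
  have : ‖relu u j‖ ≤ ‖u j‖ := by simpa [relu, Real.norm_eq_abs] using h
  exact pow_le_pow_left₀ (norm_nonneg _) this 2

open scoped RealInnerProductSpace in
theorem centroid_relative_perturbation_orthant {D n : ℕ} (hn : 0 < n)
    (v : Fin n → EuclideanSpace ℝ (Fin D))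
    (hpos : ∀ i j, 0 ≤ v i j) (hunit : ∀ i, ‖v i‖ = 1)
    (R : EuclideanSpace ℝ (Fin D) →L[ℝ] EuclideanSpace ℝ (Fin D))
    (lam : ℝ) (hR : ‖R‖ ≤ lam) :
    ‖((1 : ℝ) / n) • ∑ i, (v i + relu (R (v i))) - ((1 : ℝ) / n) • ∑ i, v i‖
      ≤ lam * Real.sqrt n * ‖((1 : ℝ) / n) • ∑ i, v i‖ := by
  have hlam : 0 ≤ lam := le_trans (norm_nonneg R) hR
  have hn' : (0 : ℝ) < n := by exact_mod_cast hn
  -- inner products are nonnegative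
  have hinner : ∀ i j, (0 : ℝ) ≤ (inner ℝ (v i) (v j) : ℝ) := by
    intro i j
    rw [PiLp.inner_apply]
    exact Finset.sum_nonneg fun k _ => by
      simpa using mul_nonneg (hpos j k) (hpos i k)
  -- lower bound on ‖∑ v i‖
  have key : (n : ℝ) ≤ ‖∑ i, v i‖ ^ 2 := by
    rw [← real_inner_self_eq_norm_sq, sum_inner]
    have h1 : (n : ℝ) = ∑ i : Fin n, (inner ℝ (v i) (v i) : ℝ) := by
      have h0 : ∀ i : Fin n, (inner ℝ (v i) (v i) : ℝ) = 1 := fun i => by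
        rw [real_inner_self_eq_norm_sq, hunit]; norm_num
      simp [h0, hunit]
    rw [h1]
    apply Finset.sum_le_sum
    intro i _
    rw [inner_sum]
    exact Finset.single_le_sum (fun j _ => hinner i j) (Finset.mem_univ i)
  have hsqrt : Real.sqrt n ≤ ‖∑ i, v i‖ := by
    have := Real.sqrt_le_sqrt key
    rwa [Real.sqrt_sq (norm_nonneg _)] at this
  -- the difference is the average of the relu terms
  have hdiff : ((1 : ℝ) / n) • ∑ i, (v i + relu (R (v i))) - ((1 : ℝ) / n) • ∑ i, v i
      = ((1 : ℝ) / n) • ∑ i, relu (R (v i)) := by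
    rw [← smul_sub, Finset.sum_add_distrib]
    congr 1
    abel
  rw [hdiff]
  have hterm : ∀ i, ‖relu (R (v i))‖ ≤ lam := by
    intro i
    calc ‖relu (R (v i))‖ ≤ ‖R (v i)‖ := norm_relu_le _
      _ ≤ ‖R‖ * ‖v i‖ := R.le_opNorm _
      _ ≤ lam := by rw [hunit i, mul_one]; exact hR
  have hLHS : ‖((1 : ℝ) / n) • ∑ i, relu (R (v i))‖ ≤ lam := by
    rw [norm_smul, Real.norm_eq_abs, abs_of_pos (by positivity)]
    calc (1 / (n : ℝ)) * ‖∑ i, relu (R (v i))‖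
        ≤ (1 / n) * ∑ i, ‖relu (R (v i))‖ := by
          apply mul_le_mul_of_nonneg_left (norm_sum_le _ _) (by positivity)
      _ ≤ (1 / n) * ∑ _i : Fin n, lam := by
          apply mul_le_mul_of_nonneg_left (Finset.sum_le_sum fun i _ => hterm i) (by positivity)
      _ = lam := by
          field_simp
          simp
  have hRHS : lam ≤ lam * Real.sqrt n * ‖((1 : ℝ) / n) • ∑ i, v i‖ := by
    rw [norm_smul, Real.norm_eq_abs, abs_of_pos (by positivity)]
    have h2 : lam * Real.sqrt n * (1 / n * Real.sqrt n) ≤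
        lam * Real.sqrt n * (1 / n * ‖∑ i, v i‖) := by
      apply mul_le_mul_of_nonneg_left _ (by positivity)
      exact mul_le_mul_of_nonneg_left hsqrt (by positivity)
    refine le_trans (le_of_eq ?_) h2
    rw [mul_assoc, ← mul_assoc (Real.sqrt n), mul_comm (Real.sqrt n) (1 / (n:ℝ)),
      mul_assoc, Real.mul_self_sqrt (le_of_lt hn')]
    field_simp
  exact le_trans hLHS hRHS
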